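/- For every language of correct protocols PROT and every finite input alphabet Σ, a language L ⊆ Σ* is accepted by some one-way nondeterministic PROT-automaton (1NB_PROT-automaton) with input alphabet Σ if and only if there exists a finite-state transducer T from the protocol alphabet Γ_wr ∪ Γ_qu ∪ Γ_re to Σ such that L = T(PROT). In other words, the class of 1NB_PROT-recognizable languages is exactly the principal rational cone generated by PROT. -/

import Mathlib

/-! ### Finite-state transducers -/

/-- A finite-state transducer from alphabet `α` to alphabet `β`, with state type `Q`:
an initial state, a set of accepting states, and a finite set of transitions
`(q, x, y, q')` reading `x ∈ α ∪ {ε}` and writing the word `y ∈ β*`. -/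
structure FST (α β Q : Type) where
  init : Q
  accept : Set Q
  trans : Set (Q × Option α × List β × Q)
  trans_fin : trans.Finite

/-- Paths of a transducer: `T.Path q u v q'` holds iff some sequence of transitions
leads from `q` to `q'` with input labels concatenating to `u` and output labels
concatenating to `v`. -/
inductive FST.Path {α β Q : Type} (T : FST α β Q) : Q → List α → List β → Q → Prop
  | refl (q : Q) : FST.Path T q [] [] q
  | step {q q' q'' : Q} {x : Option α} {y : List β} {u : List α} {v : List β} :
      (q, x, y, q') ∈ T.trans → FST.Path T q' u v q'' →
      FST.Path T q (x.toList ++ u) (y ++ v) q''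

/-- The relation computed by a transducer. -/
def FST.Rel {α β Q : Type} (T : FST α β Q) (u : List α) (v : List β) : Prop :=
  ∃ f ∈ T.accept, T.Path T.init u v f

/-- The image `T(B)` of a language under the relation computed by a transducer. -/
def FST.Img {α β Q : Type} (T : FST α β Q) (B : Set (List α)) : Set (List β) :=
  {v | ∃ u ∈ B, T.Rel u v}

/-- A transducer is deterministic if, for each state `q`, the transitions leaving `q`
either consist of a single transition with input label `ε`, or all have pairwise
distinct input labels, none of which is `ε`. -/
def FST.Det {α β Q : Type} (T : FST α β Q) : Prop :=
  ∀ q : Q,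
    (∃ t ∈ T.trans, t.1 = q ∧ t.2.1 = (none : Option α) ∧
        ∀ t' ∈ T.trans, t'.1 = q → t' = t) ∨
    ((∀ t ∈ T.trans, t.1 = q → t.2.1 ≠ none) ∧
      ∀ t ∈ T.trans, ∀ t' ∈ T.trans, t.1 = q → t'.1 = q → t.2.1 = t'.2.1 → t = t')

/-- Rational dominance: `RatDom A B` iff `A = T(B)` for some finite-state transducer. -/
def RatDom {α β : Type} (A : Set (List α)) (B : Set (List β)) : Prop :=
  ∃ (n : ℕ) (T : FST β α (Fin n)), T.Img B = A

/-! ### Protocols -/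

/-- The protocol alphabet `Γ_wr ∪ Γ_qu ∪ Γ_re` (disjoint union). -/
abbrev PLet (W Q R : Type) := W ⊕ Q ⊕ R

def wrLet {W Q R : Type} (w : W) : PLet W Q R := Sum.inl w
def quLet {W Q R : Type} (q : Q) : PLet W Q R := Sum.inr (Sum.inl q)
def reLet {W Q R : Type} (r : R) : PLet W Q R := Sum.inr (Sum.inr r)

/-- The query block `u q r`. -/
def pblock {W Q R : Type} (u : List W) (q : Q) (r : R) : List (PLet W Q R) :=
  u.map wrLet ++ [quLet q, reLet r]

/-- A word over the protocol alphabet is a protocol (w.r.t. the validity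
relation `valid`) iff it is a concatenation of query blocks `uᵢqᵢrᵢ` with
`valid qᵢ rᵢ`. -/
inductive IsProtocol {W Q R : Type} (valid : Q → R → Prop) : List (PLet W Q R) → Prop
  | nil : IsProtocol valid []
  | block (u : List W) (q : Q) (r : R) (p : List (PLet W Q R)) :
      valid q r → IsProtocol valid p → IsProtocol valid (pblock u q r ++ p)

/-- A language of correct protocols over the alphabets `W = Γ_wr`, `Q = Γ_qu`,
`R = Γ_re`, satisfying axioms (i)-(v). -/
structure ProtLang (W Q R : Type) where
  valid : Q → R → Prop
  prot : Set (List (PLet W Q R))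
  /-- (i) the empty protocol is correct -/
  empty_mem : [] ∈ prot
  /-- (ii) every member is a protocol -/
  mem_protocol : ∀ p ∈ prot, IsProtocol valid p
  /-- (iii) closure under protocol prefixes -/
  prefix_mem : ∀ p₁ p₂ : List (PLet W Q R), p₁ ++ p₂ ∈ prot → IsProtocol valid p₁ → p₁ ∈ prot
  /-- (iv) every query has some valid response extending the protocol -/
  extend : ∀ p ∈ prot, ∀ (u : List W) (q : Q), ∃ r : R, p ++ pblock u q r ∈ prot
  /-- (v) the response to a query is uniquely determined -/
  resp_unique : ∀ (p : List (PLet W Q R)) (u : List W) (q : Q) (r r' : R)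
      (s : List (PLet W Q R)),
      p ++ pblock u q r ∈ prot → p ++ pblock u q r' ++ s ∈ prot → r' = r

/-! ### Automata with an auxiliary data structure -/

/-- Input-tape letters: input letters plus the two endmarkers. -/
inductive EndM (σ : Type) where
  | lt : σ → EndM σ
  | lmark : EndM σ
  | rmark : EndM σ

/-- The input tape `⊢ w ⊣`. -/
def tape {σ : Type} (w : List σ) : List (EndM σ) :=
  EndM.lmark :: (w.map EndM.lt ++ [EndM.rmark])

/-- A one-way automaton equipped with an auxiliary data structure
(a `1NB_PROT`-automaton), over input alphabet `σ`, with state type `S`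
split into writing states (`isWr`) and query states (`¬ isWr`). -/
structure ProtAut (σ W Q R S : Type) where
  isWr : S → Prop
  s₀ : S
  F : Set S
  s₀_not_F : s₀ ∉ F
  transWr : Set (S × Option (EndM σ) × List W × S)
  transQu : Set (S × Q × R × S)
  wr_src : ∀ t ∈ transWr, isWr t.1
  qu_src : ∀ t ∈ transQu, ¬ isWr t.1
  qu_tgt : ∀ t ∈ transQu, isWr t.2.2.2
  transWr_fin : transWr.Finite

/-- Configurations `(s, v, u, p)`: state, unprocessed input, query tape, protocol. -/
abbrev PConfig (σ W Q R S : Type) := S × List (EndM σ) × List W × List (PLet W Q R)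

/-- The move relation of an automaton with an ADS, relative to the language `P`
of correct protocols. -/
inductive ProtStep {σ W Q R S : Type} (M : ProtAut σ W Q R S)
    (P : Set (List (PLet W Q R))) : PConfig σ W Q R S → PConfig σ W Q R S → Prop
  | wr {s s' : S} {a : Option (EndM σ)} {x : List W} {v : List (EndM σ)}
      {u : List W} {p : List (PLet W Q R)} :
      (s, a, x, s') ∈ M.transWr →
      ProtStep M P (s, a.toList ++ v, u, p) (s', v, u ++ x, p)
  | qu {s s' : S} {q : Q} {r : R} {v : List (EndM σ)} {u : List W}
      {p : List (PLet W Q R)} :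
      (s, q, r, s') ∈ M.transQu → p ++ pblock u q r ∈ P →
      ProtStep M P (s, v, u, p) (s', v, [], p ++ pblock u q r)

/-- `M` has an accepting run on `w` that produces the protocol `p`. -/
def ProtAut.AcceptsWith {σ W Q R S : Type} (M : ProtAut σ W Q R S)
    (P : Set (List (PLet W Q R))) (w : List σ) (p : List (PLet W Q R)) : Prop :=
  ∃ sf ∈ M.F,
    Relation.ReflTransGen (ProtStep M P) (M.s₀, tape w, [], []) (sf, [], [], p)

/-- `M` accepts the word `w`. -/
def ProtAut.Accepts {σ W Q R S : Type} (M : ProtAut σ W Q R S)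
    (P : Set (List (PLet W Q R))) (w : List σ) : Prop :=
  ∃ p ∈ P, M.AcceptsWith P w p

/-- The language accepted by `M`. -/
def ProtAut.Lang {σ W Q R S : Type} (M : ProtAut σ W Q R S)
    (P : Set (List (PLet W Q R))) : Set (List σ) :=
  {w | M.Accepts P w}

/-- `M` is deterministic: each configuration has at most one successor. -/
def ProtAut.Deterministic {σ W Q R S : Type} (M : ProtAut σ W Q R S)
    (P : Set (List (PLet W Q R))) : Prop :=
  ∀ c c₁ c₂ : PConfig σ W Q R S, ProtStep M P c c₁ → ProtStep M P c c₂ → c₁ = c₂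

/-- The class of languages over `σ` accepted by `1NB_PROT`-automata. -/
def ProtCL {W Q R : Type} (P : ProtLang W Q R) (σ : Type) : Set (Set (List σ)) :=
  {L | ∃ (n : ℕ) (M : ProtAut σ W Q R (Fin n)), L = M.Lang P.prot}

/-- The class of languages over `σ` accepted by deterministic `1DB_PROT`-automata. -/
def ProtCLdet {W Q R : Type} (P : ProtLang W Q R) (σ : Type) : Set (Set (List σ)) :=
  {L | ∃ (n : ℕ) (M : ProtAut σ W Q R (Fin n)),
    M.Deterministic P.prot ∧ L = M.Lang P.prot}

/-! ### Concatenation and Kleene star of languages -/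

def LangConcat {σ : Type} (L₁ L₂ : Set (List σ)) : Set (List σ) :=
  {w | ∃ u ∈ L₁, ∃ v ∈ L₂, w = u ++ v}

def LangStar {σ : Type} (L : Set (List σ)) : Set (List σ) :=
  {w | ∃ ws : List (List σ), (∀ u ∈ ws, u ∈ L) ∧ w = ws.flatten}

/-!
Both inclusions are simulations. Given an automaton `M`, a transducer reads a protocol and
guesses a run of `M` producing it, writing out the input letters that the run consumes; a query
step of `M` corresponds to reading the two letters `q r`, and prefix closure of `PROT` shows that
every intermediate query of the run is answered correctly. Conversely, given a transducer `T`,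
an automaton guesses an accepting path of `T` on a protocol: it writes the write letters `T`
reads, turns a query letter followed by a response letter into a query, and checks the output
of `T` against its own input. Words written or output in one transition are buffered letter by
letter in the finite state, as suffixes of the finitely many transition labels.
-/

/-! ### Relabelling states -/

namespace FST

variable {α β S S' : Type}

theorem Path.append {T : FST α β S} {q q' q'' : S} {u u' : List α} {v v' : List β}
    (h : T.Path q u v q') (h' : T.Path q' u' v' q'') : T.Path q (u ++ u') (v ++ v') q'' := by
  induction h with
  | refl => simpa using h'
  | step ht _ ih => simpa [List.append_assoc] using Path.step ht (ih h')

theorem Path.map {T : FST α β S} {T' : FST α β S'} (f : S → S')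
    (hf : ∀ t ∈ T.trans, (f t.1, t.2.1, t.2.2.1, f t.2.2.2) ∈ T'.trans)
    {q q' : S} {u : List α} {v : List β} (h : T.Path q u v q') :
    T'.Path (f q) u v (f q') := by
  induction h with
  | refl => exact .refl _
  | step ht _ ih => exact .step (hf _ ht) ih

def relabel (T : FST α β S) (e : S ≃ S') : FST α β S' where
  init := e T.init
  accept := e '' T.accept
  trans := (fun t => (e t.1, t.2.1, t.2.2.1, e t.2.2.2)) '' T.trans
  trans_fin := T.trans_fin.image _

theorem img_relabel (T : FST α β S) (e : S ≃ S') (B : Set (List α)) :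
    (T.relabel e).Img B = T.Img B := by
  ext v
  constructor
  · rintro ⟨u, hu, _, ⟨f, hf, rfl⟩, hpath⟩
    refine ⟨u, hu, f, hf, ?_⟩
    simpa [relabel] using hpath.map e.symm (by rintro _ ⟨t, ht, rfl⟩; simpa using ht)
  · rintro ⟨u, hu, f, hf, hpath⟩
    exact ⟨u, hu, e f, ⟨f, hf, rfl⟩,
      hpath.map (T' := T.relabel e) e fun t ht => ⟨t, ht, rfl⟩⟩

theorem exists_fin_img_eq [Finite S] (T : FST α β S) (B : Set (List α)) :
    ∃ (n : ℕ) (T' : FST α β (Fin n)), T'.Img B = T.Img B := by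
  obtain ⟨n, ⟨e⟩⟩ := Finite.exists_equiv_fin S
  exact ⟨n, T.relabel e, T.img_relabel e B⟩

end FST

namespace ProtAut

variable {σ W Q R S S' : Type}

def relabel (M : ProtAut σ W Q R S) (e : S ≃ S') : ProtAut σ W Q R S' where
  isWr s := M.isWr (e.symm s)
  s₀ := e M.s₀
  F := e '' M.F
  s₀_not_F := by rintro ⟨s, hs, hes⟩; exact M.s₀_not_F (e.injective hes ▸ hs)
  transWr := (fun t => (e t.1, t.2.1, t.2.2.1, e t.2.2.2)) '' M.transWr
  transQu := (fun t => (e t.1, t.2.1, t.2.2.1, e t.2.2.2)) '' M.transQu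
  wr_src := by rintro _ ⟨t, ht, rfl⟩; simpa using M.wr_src t ht
  qu_src := by rintro _ ⟨t, ht, rfl⟩; simpa using M.qu_src t ht
  qu_tgt := by rintro _ ⟨t, ht, rfl⟩; simpa using M.qu_tgt t ht
  transWr_fin := M.transWr_fin.image _

theorem _root_.ProtStep.map {M : ProtAut σ W Q R S} {M' : ProtAut σ W Q R S'} (f : S → S')
    (hwr : ∀ t ∈ M.transWr, (f t.1, t.2.1, t.2.2.1, f t.2.2.2) ∈ M'.transWr)
    (hqu : ∀ t ∈ M.transQu, (f t.1, t.2.1, t.2.2.1, f t.2.2.2) ∈ M'.transQu)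
    {P : Set (List (PLet W Q R))} {c c' : PConfig σ W Q R S} (h : ProtStep M P c c') :
    ProtStep M' P (f c.1, c.2) (f c'.1, c'.2) := by
  cases h with
  | wr ht => exact .wr (hwr _ ht)
  | qu ht hm => exact .qu (hqu _ ht) hm

theorem lang_relabel (M : ProtAut σ W Q R S) (e : S ≃ S') (P : Set (List (PLet W Q R))) :
    (M.relabel e).Lang P = M.Lang P := by
  ext w
  constructor
  · rintro ⟨p, hp, _, ⟨sf, hsf, rfl⟩, hrun⟩
    refine ⟨p, hp, sf, hsf, ?_⟩
    simpa [relabel, Function.onFun] using hrun.lift (fun c => (e.symm c.1, c.2)) fun _ _ h =>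
      h.map (M := M.relabel e) e.symm (by rintro _ ⟨t, ht, rfl⟩; simpa using ht)
        (by rintro _ ⟨t, ht, rfl⟩; simpa using ht)
  · rintro ⟨p, hp, sf, hsf, hrun⟩
    refine ⟨p, hp, e sf, ⟨sf, hsf, rfl⟩, ?_⟩
    simpa [relabel] using hrun.lift (fun c => (e c.1, c.2))
      fun _ _ h => h.map (M' := M.relabel e) e (fun t ht => ⟨t, ht, rfl⟩)
        fun t ht => ⟨t, ht, rfl⟩

theorem exists_fin_lang_eq [Finite S] (M : ProtAut σ W Q R S) (P : Set (List (PLet W Q R))) :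
    ∃ (n : ℕ) (M' : ProtAut σ W Q R (Fin n)), M'.Lang P = M.Lang P := by
  obtain ⟨n, ⟨e⟩⟩ := Finite.exists_equiv_fin S
  exact ⟨n, M.relabel e, M.lang_relabel e P⟩

end ProtAut

/-! ### Parsing protocols -/

section Protocol

variable {W Q R : Type} {valid : Q → R → Prop}

theorem dropWhile_isLeft_map_wrLet_append (u : List W) {rest : List (PLet W Q R)}
    (hrest : ∀ a ∈ rest.head?, a.isLeft = false) :
    (u.map wrLet ++ rest).dropWhile (·.isLeft) = rest := by
  induction u with
  | nil =>
    cases rest with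
    | nil => rfl
    | cons a l => simp [hrest a rfl]
  | cons w u ih => simpa [List.dropWhile_cons, wrLet] using ih

theorem IsProtocol.map_wrLet_append {u : List W} {rest : List (PLet W Q R)}
    (h : IsProtocol valid (u.map wrLet ++ rest)) (hrest : ∀ a ∈ rest.head?, a.isLeft = false) :
    (u = [] ∧ rest = []) ∨ ∃ q r rest',
      rest = quLet q :: reLet r :: rest' ∧ valid q r ∧ IsProtocol valid rest' := by
  generalize hz : u.map wrLet ++ rest = z at h
  cases h with
  | nil => simp_all
  | block u' q r p hv hp =>
    right
    refine ⟨q, r, p, ?_, hv, hp⟩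
    have := congrArg (List.dropWhile (·.isLeft)) hz
    rw [dropWhile_isLeft_map_wrLet_append u hrest, pblock, List.append_assoc,
      dropWhile_isLeft_map_wrLet_append u' (by simp [quLet])] at this
    simpa using this

theorem IsProtocol.eq_nil_of_map_wrLet {u : List W}
    (h : IsProtocol valid (u.map wrLet : List (PLet W Q R))) : u = [] := by
  have h' : IsProtocol valid (u.map wrLet ++ []) := by simpa using h
  simpa using h'.map_wrLet_append (by simp)

theorem IsProtocol.of_map_wrLet_append_quLet {u : List W} {q : Q} {rest : List (PLet W Q R)}
    (h : IsProtocol valid (u.map wrLet ++ quLet q :: rest)) :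
    ∃ r rest', rest = reLet r :: rest' ∧ valid q r ∧ IsProtocol valid rest' := by
  simpa [quLet] using h.map_wrLet_append (by simp [quLet])

theorem IsProtocol.not_map_wrLet_append_reLet {u : List W} {r : R} {rest : List (PLet W Q R)} :
    ¬ IsProtocol valid (u.map wrLet ++ reLet r :: rest) := fun h => by
  simpa [quLet, reLet] using h.map_wrLet_append (by simp [reLet])

theorem IsProtocol.append_pblock {p : List (PLet W Q R)} (hp : IsProtocol valid p) (u : List W)
    {q : Q} {r : R} (hv : valid q r) : IsProtocol valid (p ++ pblock u q r) := by
  induction hp with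
  | nil => simpa using IsProtocol.block u q r [] hv .nil
  | block u' q' r' p' hv' _ ih => simpa [List.append_assoc] using IsProtocol.block u' q' r' _ hv' ih

theorem IsProtocol.of_append {p z : List (PLet W Q R)} (hp : IsProtocol valid p)
    (h : IsProtocol valid (p ++ z)) : IsProtocol valid z := by
  induction hp with
  | nil => simpa using h
  | block u q r p' _ _ ih =>
    obtain ⟨_, _, heq, -, hrest⟩ :=
      IsProtocol.of_map_wrLet_append_quLet (by simpa [pblock] using h)
    exact ih (by simp_all)

end Protocol

namespace ProtLang

variable {W Q R : Type} (P : ProtLang W Q R) {p : List (PLet W Q R)} {u : List W}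

theorem eq_nil_of_append_map_wrLet_mem (hp : IsProtocol P.valid p)
    (h : p ++ u.map wrLet ∈ P.prot) : u = [] :=
  (hp.of_append (P.mem_protocol _ h)).eq_nil_of_map_wrLet

theorem not_append_reLet_mem (hp : IsProtocol P.valid p) {r : R} {rest : List (PLet W Q R)} :
    p ++ (u.map wrLet ++ reLet r :: rest) ∉ P.prot := fun h =>
  IsProtocol.not_map_wrLet_append_reLet (hp.of_append (P.mem_protocol _ h))

theorem exists_append_pblock_mem (hp : IsProtocol P.valid p) {q : Q} {rest : List (PLet W Q R)}
    (h : p ++ (u.map wrLet ++ quLet q :: rest) ∈ P.prot) :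
    ∃ r rest', rest = reLet r :: rest' ∧
      p ++ pblock u q r ∈ P.prot ∧ IsProtocol P.valid (p ++ pblock u q r) := by
  obtain ⟨r, rest', rfl, hv, -⟩ :=
    (hp.of_append (P.mem_protocol _ h)).of_map_wrLet_append_quLet
  have hblock := hp.append_pblock u hv
  exact ⟨r, rest', rfl, P.prefix_mem _ rest' (by simpa [pblock] using h) hblock, hblock⟩

end ProtLang

/-! ### Output buffers -/

/-- A machine that emits the output word of a transition one letter at a time keeps the part
still to be emitted, an element of this set, in its state. -/
def outputSuffixes {A B D β : Type} (TS : Set (A × B × List β × D)) : Set (List β) :=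
  {l | l = [] ∨ ∃ t ∈ TS, l <:+ t.2.2.1}

namespace outputSuffixes

variable {A B D β : Type} {TS : Set (A × B × List β × D)}

theorem finite (h : TS.Finite) : (outputSuffixes TS).Finite := by
  refine ((h.biUnion fun t _ => t.2.2.1.tails.finite_toSet).insert []).subset ?_
  rintro l (rfl | ⟨t, ht, hl⟩)
  · exact Set.mem_insert _ _
  · exact Set.mem_insert_of_mem _ (Set.mem_biUnion ht (by simpa [List.mem_tails] using hl))

theorem nil_mem : [] ∈ outputSuffixes TS := Or.inl rfl

theorem output_mem {t} (ht : t ∈ TS) : t.2.2.1 ∈ outputSuffixes TS :=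
  Or.inr ⟨t, ht, List.suffix_refl _⟩

theorem of_cons_mem {c : β} {l : List β} (h : c :: l ∈ outputSuffixes TS) :
    l ∈ outputSuffixes TS := by
  rcases h with h | ⟨t, ht, hl⟩
  · simp at h
  · exact Or.inr ⟨t, ht, (List.suffix_cons c l).trans hl⟩

end outputSuffixes

/-! ### From an automaton to a transducer -/

/-- How much of the tape `⊢ w ⊣` an automaton has read: nothing, `⊢` and part of `w`,
or all of it. -/
inductive Phase where
  | before | inside | after
deriving DecidableEq

instance : Fintype Phase := ⟨{.before, .inside, .after}, by intro x; cases x <;> simp⟩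

namespace Phase

variable {σ : Type}

inductive Step : Phase → Option (EndM σ) → List σ → Phase → Prop
  | eps (ph : Phase) : Step ph none [] ph
  | lmark : Step before (some .lmark) [] inside
  | letter (c : σ) : Step inside (some (.lt c)) [c] inside
  | rmark : Step inside (some .rmark) [] after

/-- `v` is the unread part of the tape in phase `ph` when `z` is the unread part of the input. -/
def Remains : Phase → List σ → List (EndM σ) → Prop
  | before, z, v => v = tape z
  | inside, z, v => v = z.map .lt ++ [.rmark]
  | after, z, v => v = [] ∧ z = []

theorem Remains.eq_after {ph : Phase} {z : List σ} (h : ph.Remains z []) :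
    ph = after ∧ z = [] := by
  cases ph <;> simp_all [Remains, tape]

theorem Remains.exists_step {ph : Phase} {z : List σ} {a : Option (EndM σ)} {v : List (EndM σ)}
    (h : ph.Remains z (a.toList ++ v)) :
    ∃ out z' ph', Step ph a out ph' ∧ z = out ++ z' ∧ ph'.Remains z' v := by
  rcases a with _ | (c | _ | _)
  · exact ⟨[], z, ph, .eps ph, rfl, by simpa using h⟩
  · cases ph with
    | inside =>
      cases z with
      | nil => simp [Remains] at h
      | cons c' z =>
        simp only [Remains, Option.toList_some, List.map_cons, List.cons_append,
          List.nil_append, List.cons.injEq, EndM.lt.injEq] at h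
        exact ⟨[c], z, inside, h.1 ▸ .letter c, by simp [h.1], by simp [Remains, h.2]⟩
    | _ => cases z <;> simp_all [Remains, tape]
  · cases ph with
    | before =>
      simp only [Remains, tape, Option.toList_some, List.singleton_append, List.cons.injEq] at h
      exact ⟨[], z, inside, .lmark, rfl, by simp [Remains, h.2]⟩
    | _ => cases z <;> simp_all [Remains]
  · cases ph with
    | inside =>
      cases z with
      | nil => exact ⟨[], [], after, .rmark, rfl, by simpa [Remains] using h⟩
      | cons => simp [Remains] at h
    | _ => cases z <;> simp_all [Remains, tape]

theorem Step.eq_after {ph' : Phase} {a : Option (EndM σ)} {out : List σ}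
    (h : Step after a out ph') : ph' = after ∧ out = [] := by
  cases h; simp

theorem Step.remains {ph ph' : Phase} {a : Option (EndM σ)} {out z : List σ} {v : List (EndM σ)}
    (h : Step ph a out ph') (hz : ph' = after → z = []) (hv : ph.Remains (out ++ z) v) :
    ∃ v', v = a.toList ++ v' ∧ ph'.Remains z v' := by
  cases h with
  | eps => exact ⟨v, rfl, hv⟩
  | lmark => exact ⟨_, hv, rfl⟩
  | letter c => exact ⟨_, hv, rfl⟩
  | rmark => exact ⟨[], by simpa [Remains, hz rfl] using hv, rfl, hz rfl⟩

end Phase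

namespace ProtAut

variable {σ W Q R S : Type} {M : ProtAut σ W Q R S} {P : ProtLang W Q R} {sf : S}

/-- From state `s` in phase `ph`, with `z` the unread part of the input, `M` can finish in `sf`
by extending any protocol-so-far (with pending write letters `u`) by exactly `ext`. The first
conjunct, that no input is left after `⊣`, is what makes the move reading `⊣` invertible. -/
def Completes (M : ProtAut σ W Q R S) (P : ProtLang W Q R) (sf : S) (ph : Phase) (s : S)
    (ext : List (PLet W Q R)) (z : List σ) : Prop :=
  (ph = .after → z = []) ∧
    ∀ p u v, IsProtocol P.valid p → p ++ u.map wrLet ++ ext ∈ P.prot → ph.Remains z v →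
      Relation.ReflTransGen (ProtStep M P.prot) (s, v, u, p) (sf, [], [], p ++ u.map wrLet ++ ext)

theorem completes_after (P : ProtLang W Q R) (sf : S) : M.Completes P sf .after sf [] [] := by
  refine ⟨fun _ => rfl, fun p u v hp hm hv => ?_⟩
  obtain rfl := P.eq_nil_of_append_map_wrLet_mem hp (by simpa using hm)
  obtain ⟨rfl, -⟩ := hv
  simpa using Relation.ReflTransGen.refl

theorem Completes.move {ph ph' : Phase} {s s' : S} {a : Option (EndM σ)} {x : List W}
    {out : List σ} {ext : List (PLet W Q R)} {z : List σ}
    (ht : (s, a, x, s') ∈ M.transWr) (hph : ph.Step a out ph')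
    (h : M.Completes P sf ph' s' ext z) :
    M.Completes P sf ph s (x.map wrLet ++ ext) (out ++ z) := by
  refine ⟨fun hafter => ?_, fun p u v hp hm hv => ?_⟩
  · obtain ⟨rfl, rfl⟩ := (hafter ▸ hph).eq_after
    exact h.1 rfl
  · obtain ⟨v', rfl, hv'⟩ := hph.remains h.1 hv
    have hrun := h.2 p (u ++ x) v' hp (by simpa using hm) hv'
    simpa using hrun.head (ProtStep.wr ht)

theorem Completes.query {ph : Phase} {s s' : S} {q : Q} {r : R} {ext : List (PLet W Q R)}
    {z : List σ} (ht : (s, q, r, s') ∈ M.transQu) (h : M.Completes P sf ph s' ext z) :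
    M.Completes P sf ph s (quLet q :: reLet r :: ext) z := by
  refine ⟨h.1, fun p u v hp hm hv => ?_⟩
  obtain ⟨r', rest, hr, hblock, hprot⟩ := P.exists_append_pblock_mem hp (by simpa using hm)
  obtain ⟨rfl, rfl⟩ : r = r' ∧ ext = rest := by simpa [reLet] using hr
  have hrun := h.2 (p ++ pblock u q r) [] v hprot (by simpa [pblock] using hm) hv
  simpa [pblock] using hrun.head (ProtStep.qu ht hblock)

variable (M)

abbrev Buffer : Type := ↥(outputSuffixes M.transWr)

instance : Finite M.Buffer := (outputSuffixes.finite M.transWr_fin).to_subtype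

def nilBuf : M.Buffer := ⟨[], outputSuffixes.nil_mem⟩

/-- A state of the transducer simulating an automaton: the automaton's state, the phase and
the buffered part of the last written word that is still to be read as protocol letters; or
a guessed response that the next protocol letter has to confirm. -/
inductive FSTState (S B R : Type) where
  | run (ph : Phase) (s : S) (buf : B)
  | answer (ph : Phase) (r : R) (s : S)
deriving Fintype

instance {B : Type} [Finite S] [Finite B] [Finite R] : Finite (FSTState S B R) := by
  have := Fintype.ofFinite S; have := Fintype.ofFinite B; have := Fintype.ofFinite R
  infer_instance

inductive FSTStep : FSTState S M.Buffer R → Option (PLet W Q R) → List σ →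
    FSTState S M.Buffer R → Prop
  | move {ph ph' : Phase} {s s' : S} {a : Option (EndM σ)} {x : List W} {out : List σ}
      (h : (s, a, x, s') ∈ M.transWr) (hph : ph.Step a out ph') :
      FSTStep (.run ph s M.nilBuf) none out (.run ph' s' ⟨x, outputSuffixes.output_mem h⟩)
  | write {ph : Phase} {s : S} {w : W} {l : List W} (hl : w :: l ∈ outputSuffixes M.transWr) :
      FSTStep (.run ph s ⟨w :: l, hl⟩) (some (wrLet w)) []
        (.run ph s ⟨l, outputSuffixes.of_cons_mem hl⟩)
  | query {ph : Phase} {s s' : S} {q : Q} {r : R} (h : (s, q, r, s') ∈ M.transQu) :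
      FSTStep (.run ph s M.nilBuf) (some (quLet q)) [] (.answer ph r s')
  | answer (ph : Phase) (r : R) (s : S) :
      FSTStep (.answer ph r s) (some (reLet r)) [] (.run ph s M.nilBuf)

variable [Finite S] [Finite W] [Finite Q] [Finite R] [Finite σ]

def toFST : FST (PLet W Q R) σ (FSTState S M.Buffer R) where
  init := .run .before M.s₀ M.nilBuf
  accept := (fun sf => .run .after sf M.nilBuf) '' M.F
  trans := {t | M.FSTStep t.1 t.2.1 t.2.2.1 t.2.2.2}
  trans_fin := by
    refine (Set.finite_univ.prod (Set.finite_univ.prod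
      ((List.finite_length_le σ 1).prod Set.finite_univ))).subset ?_
    rintro ⟨st, x, y, st'⟩ h
    simp only [Set.mem_ofPred_eq] at h
    refine ⟨trivial, trivial, ?_, trivial⟩
    cases h with
    | move _ hph => cases hph <;> simp
    | _ => simp

theorem toFST_path_write {ph : Phase} {s : S} :
    ∀ (l : List W) (hl : l ∈ outputSuffixes M.transWr),
      M.toFST.Path (.run ph s ⟨l, hl⟩) (l.map wrLet) [] (.run ph s M.nilBuf)
  | [], _ => .refl _
  | w :: l, hl => by
    simpa using FST.Path.step (T := M.toFST) (FSTStep.write hl)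
      (toFST_path_write l (outputSuffixes.of_cons_mem hl))

theorem toFST_path_of_run {P : Set (List (PLet W Q R))} {c : PConfig σ W Q R S}
    {pf : List (PLet W Q R)} (h : Relation.ReflTransGen (ProtStep M P) c (sf, [], [], pf))
    {ph : Phase} {z : List σ} (hv : ph.Remains z c.2.1) :
    ∃ ext, pf = c.2.2.2 ++ c.2.2.1.map wrLet ++ ext ∧
      M.toFST.Path (.run ph c.1 M.nilBuf) ext z (.run .after sf M.nilBuf) := by
  induction h using Relation.ReflTransGen.head_induction_on generalizing ph z with
  | refl =>
    obtain ⟨rfl, rfl⟩ := Phase.Remains.eq_after hv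
    exact ⟨[], by simp, .refl _⟩
  | head hstep _ ih =>
    cases hstep with
    | @wr s s' a x v u p ht =>
      obtain ⟨out, z', ph', hph, rfl, hv'⟩ := Phase.Remains.exists_step hv
      obtain ⟨ext, hpf, hpath⟩ := ih hv'
      refine ⟨x.map wrLet ++ ext, by simpa using hpf, ?_⟩
      simpa using FST.Path.step (T := M.toFST) (FSTStep.move ht hph)
        ((M.toFST_path_write x _).append hpath)
    | @qu s s' q r v u p ht =>
      obtain ⟨ext, hpf, hpath⟩ := ih hv
      refine ⟨quLet q :: reLet r :: ext, by simpa [pblock] using hpf, ?_⟩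
      simpa using FST.Path.step (T := M.toFST) (FSTStep.query ht)
        (FST.Path.step (T := M.toFST) (FSTStep.answer ph r s') hpath)

theorem completes_of_toFST_path {st : FSTState S M.Buffer R} {ext : List (PLet W Q R)}
    {z : List σ} (h : M.toFST.Path st ext z (.run .after sf M.nilBuf)) :
    match (generalizing := false) st with
    | .run ph s buf => ∃ ext', ext = buf.1.map wrLet ++ ext' ∧ M.Completes P sf ph s ext' z
    | .answer ph r s => ∃ ext', ext = reLet r :: ext' ∧ M.Completes P sf ph s ext' z := by
  generalize hfin : FSTState.run .after sf M.nilBuf = fin at h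
  induction h with
  | refl => subst hfin; exact ⟨[], rfl, completes_after P sf⟩
  | step ht _ ih =>
    cases ht with
    | move ht hph =>
      obtain ⟨ext', rfl, h⟩ := ih hfin
      exact ⟨_, rfl, h.move ht hph⟩
    | write hl =>
      obtain ⟨ext', rfl, h⟩ := ih hfin
      exact ⟨ext', by simp, h⟩
    | query ht =>
      obtain ⟨ext', rfl, h⟩ := ih hfin
      exact ⟨_, rfl, h.query ht⟩
    | answer ph r s =>
      obtain ⟨ext', rfl, h⟩ := ih hfin
      exact ⟨_, rfl, h⟩

theorem img_toFST (P : ProtLang W Q R) :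
    M.toFST.Img P.prot = M.Lang P.prot := by
  ext w
  constructor
  · rintro ⟨p, hp, _, ⟨sf, hsf, rfl⟩, hpath⟩
    obtain ⟨ext, rfl, h⟩ := M.completes_of_toFST_path (P := P) hpath
    exact ⟨_, hp, sf, hsf, by simpa using h.2 [] [] (tape w) .nil (by simpa using hp) rfl⟩
  · rintro ⟨p, hp, sf, hsf, hrun⟩
    obtain ⟨ext, rfl, hpath⟩ := M.toFST_path_of_run hrun (ph := .before) (z := w) rfl
    exact ⟨_, hp, _, ⟨sf, hsf, rfl⟩, hpath⟩

end ProtAut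

/-! ### From a transducer to an automaton -/

instance {σ : Type} [Finite σ] : Finite (EndM σ) :=
  Finite.of_injective (fun a : EndM σ => match a with
    | .lt c => some (some c)
    | .lmark => some none
    | .rmark => none)
    (by rintro (_ | _ | _) (_ | _ | _) h <;> simp_all)

theorem tape_injective {σ : Type} : Function.Injective (tape : List σ → List (EndM σ)) := by
  intro a b h
  simp only [tape, List.cons.injEq, List.append_cancel_right_eq, true_and] at h
  exact List.map_injective_iff.2 (fun _ _ h => by cases h; rfl) h

def pending {W Q R : Type} (u : List W) (oq : Option Q) : List (PLet W Q R) :=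
  u.map wrLet ++ oq.toList.map quLet

namespace FST

variable {σ W Q R S : Type} (T : FST (PLet W Q R) σ S)

abbrev Buffer : Type := ↥(outputSuffixes T.trans)

instance : Finite T.Buffer := (outputSuffixes.finite T.trans_fin).to_subtype

def nilBuf : T.Buffer := ⟨[], outputSuffixes.nil_mem⟩

/-- A state of the automaton simulating a transducer: the transducer's state, the buffered part
of its last output that is still to be matched against the input, and the query read since
the last response, if any; or a query state about to ask that query. -/
inductive AutState (S B Q : Type) where
  | start
  | accept
  | write (t : S) (buf : B) (oq : Option Q)
  | query (t : S) (q : Q)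
deriving Fintype

instance {B : Type} [Finite S] [Finite B] [Finite Q] : Finite (AutState S B Q) := by
  have := Fintype.ofFinite S; have := Fintype.ofFinite B; have := Fintype.ofFinite Q
  infer_instance

def AutState.IsWrite {B : Type} : AutState S B Q → Prop
  | .query _ _ => False
  | _ => True

inductive AutWrStep : AutState S T.Buffer Q → Option (EndM σ) → List W →
    AutState S T.Buffer Q → Prop
  | start : AutWrStep .start (some .lmark) [] (.write T.init T.nilBuf none)
  | eps {t t' : S} {y : List σ} (h : (t, none, y, t') ∈ T.trans) (oq : Option Q) :
      AutWrStep (.write t T.nilBuf oq) none [] (.write t' ⟨y, outputSuffixes.output_mem h⟩ oq)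
  | write {t t' : S} {w : W} {y : List σ} (h : (t, some (wrLet w), y, t') ∈ T.trans) :
      AutWrStep (.write t T.nilBuf none) none [w]
        (.write t' ⟨y, outputSuffixes.output_mem h⟩ none)
  | query {t t' : S} {q : Q} {y : List σ} (h : (t, some (quLet q), y, t') ∈ T.trans) :
      AutWrStep (.write t T.nilBuf none) none []
        (.write t' ⟨y, outputSuffixes.output_mem h⟩ (some q))
  | ask (t : S) (q : Q) : AutWrStep (.write t T.nilBuf (some q)) none [] (.query t q)
  | read {t : S} {c : σ} {l : List σ} (hl : c :: l ∈ outputSuffixes T.trans) (oq : Option Q) :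
      AutWrStep (.write t ⟨c :: l, hl⟩ oq) (some (.lt c)) []
        (.write t ⟨l, outputSuffixes.of_cons_mem hl⟩ oq)
  | finish {t : S} (h : t ∈ T.accept) :
      AutWrStep (.write t T.nilBuf none) (some .rmark) [] .accept

inductive AutQuStep : AutState S T.Buffer Q → Q → R → AutState S T.Buffer Q → Prop
  | answer {t t' : S} {r : R} {y : List σ} (h : (t, some (reLet r), y, t') ∈ T.trans) (q : Q) :
      AutQuStep (.query t q) q r (.write t' ⟨y, outputSuffixes.output_mem h⟩ none)

/-- The configuration `c` of the simulating automaton is on track to produce the protocol `pf`: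
an accepting path of `T` from the simulated state reads the rest of `pf` and outputs the rest of
the input. -/
def TracksPath (pf : List (PLet W Q R)) : PConfig σ W Q R (AutState S T.Buffer Q) → Prop
  | (.start, v, u, p) => ∃ f ∈ T.accept, ∃ ext z, T.Path T.init ext z f ∧
      pf = p ++ u.map wrLet ++ ext ∧ v = tape z
  | (.accept, v, u, p) => v = [] ∧ u = [] ∧ p = pf
  | (.write t buf oq, v, u, p) => ∃ f ∈ T.accept, ∃ ext z, T.Path t ext z f ∧
      pf = p ++ pending u oq ++ ext ∧ v = (buf.1 ++ z).map .lt ++ [.rmark]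
  | (.query t q, v, u, p) => ∃ f ∈ T.accept, ∃ r ext z, T.Path t (reLet r :: ext) z f ∧
      pf = p ++ pblock u q r ++ ext ∧ v = z.map .lt ++ [.rmark]

variable {T} {pf : List (PLet W Q R)} {v : List (EndM σ)} {u : List W} {p : List (PLet W Q R)}

theorem TracksPath.of_wrStep {s s' : AutState S T.Buffer Q} {a : Option (EndM σ)} {x : List W}
    (h : T.AutWrStep s a x s') (hc : T.TracksPath pf (s', v, u ++ x, p)) :
    T.TracksPath pf (s, a.toList ++ v, u, p) := by
  cases h with
  | start =>
    obtain ⟨f, hf, ext, z, hpath, rfl, rfl⟩ := hc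
    exact ⟨f, hf, ext, z, hpath, by simp [pending], by simp [tape, nilBuf]⟩
  | eps ht oq =>
    obtain ⟨f, hf, ext, z, hpath, rfl, rfl⟩ := hc
    exact ⟨f, hf, ext, _, by simpa using hpath.step ht, by simp, by simp [nilBuf]⟩
  | write ht =>
    obtain ⟨f, hf, ext, z, hpath, rfl, rfl⟩ := hc
    exact ⟨f, hf, _, _, hpath.step ht, by simp [pending], by simp [nilBuf]⟩
  | query ht =>
    obtain ⟨f, hf, ext, z, hpath, rfl, rfl⟩ := hc
    exact ⟨f, hf, _, _, hpath.step ht, by simp [pending], by simp [nilBuf]⟩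
  | ask t q =>
    obtain ⟨f, hf, r, ext, z, hpath, rfl, rfl⟩ := hc
    exact ⟨f, hf, reLet r :: ext, z, hpath, by simp [pending, pblock], by simp [nilBuf]⟩
  | read hl oq =>
    obtain ⟨f, hf, ext, z, hpath, rfl, rfl⟩ := hc
    exact ⟨f, hf, ext, z, hpath, by simp, by simp⟩
  | finish hf =>
    obtain ⟨rfl, hu, rfl⟩ := hc
    obtain rfl : u = [] := by simpa using hu
    exact ⟨_, hf, [], [], .refl _, by simp [pending], by simp [nilBuf]⟩

theorem TracksPath.of_quStep {s s' : AutState S T.Buffer Q} {q : Q} {r : R}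
    (h : T.AutQuStep s q r s') (hc : T.TracksPath pf (s', v, [], p ++ pblock u q r)) :
    T.TracksPath pf (s, v, u, p) := by
  cases h with
  | answer ht q =>
    obtain ⟨f, hf, ext, z, hpath, rfl, rfl⟩ := hc
    exact ⟨f, hf, r, ext, _, hpath.step ht, by simp [pending], by simp⟩

variable (T)

variable [Finite S] [Finite W] [Finite Q] [Finite σ]

def toProtAut : ProtAut σ W Q R (AutState S T.Buffer Q) where
  isWr := AutState.IsWrite
  s₀ := .start
  F := {.accept}
  s₀_not_F := by simp
  transWr := {t | T.AutWrStep t.1 t.2.1 t.2.2.1 t.2.2.2}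
  transQu := {t | T.AutQuStep t.1 t.2.1 t.2.2.1 t.2.2.2}
  wr_src := by rintro ⟨_, _, _, _⟩ h; cases h <;> trivial
  qu_src := by rintro ⟨_, _, _, _⟩ h; dsimp only [Set.mem_ofPred_eq] at h; cases h; exact id
  qu_tgt := by rintro ⟨_, _, _, _⟩ h; dsimp only [Set.mem_ofPred_eq] at h; cases h; trivial
  transWr_fin := by
    refine (Set.finite_univ.prod (Set.finite_univ.prod
      ((List.finite_length_le W 1).prod Set.finite_univ))).subset ?_
    rintro ⟨st, a, x, st'⟩ h
    simp only [Set.mem_ofPred_eq] at h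
    refine ⟨trivial, trivial, ?_, trivial⟩
    cases h <;> simp

theorem toProtAut_run_read {P : Set (List (PLet W Q R))} {t : S} {oq : Option Q}
    (v : List (EndM σ)) (u : List W) (p : List (PLet W Q R)) :
    ∀ (l : List σ) (hl : l ∈ outputSuffixes T.trans),
      Relation.ReflTransGen (ProtStep T.toProtAut P)
        (.write t ⟨l, hl⟩ oq, l.map .lt ++ v, u, p) (.write t T.nilBuf oq, v, u, p)
  | [], _ => .refl
  | c :: l, hl => by
    have hstep := ProtStep.wr (M := T.toProtAut) (P := P) (u := u) (p := p)
      (v := l.map .lt ++ v) (AutWrStep.read (t := t) hl oq)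
    exact .head (by simpa using hstep) (toProtAut_run_read v u p l _)

theorem toProtAut_run_of_trans {P : ProtLang W Q R} {t t' : S} {x : Option (PLet W Q R)}
    {y : List σ} (ht : (t, x, y, t') ∈ T.trans) {p ext : List (PLet W Q R)} {u : List W}
    {oq : Option Q} (hp : IsProtocol P.valid p)
    (hm : p ++ pending u oq ++ x.toList ++ ext ∈ P.prot) (v : List (EndM σ)) :
    ∃ p' u' oq', IsProtocol P.valid p' ∧
      p' ++ pending u' oq' = p ++ pending u oq ++ x.toList ∧
      Relation.ReflTransGen (ProtStep T.toProtAut P.prot) (.write t T.nilBuf oq, v, u, p)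
        (.write t' ⟨y, outputSuffixes.output_mem ht⟩ oq', v, u', p') := by
  have wr := fun {a x s'} (h : T.AutWrStep (.write t T.nilBuf oq) a x s') =>
    ProtStep.wr (M := T.toProtAut) (P := P.prot) (u := u) (p := p) (v := v) h
  rcases x with _ | w | q | r
  · exact ⟨p, u, oq, hp, by simp, .single (by simpa using wr (AutWrStep.eps ht oq))⟩
  · cases oq with
    | none =>
      exact ⟨p, u ++ [w], none, hp, by simp [pending, wrLet],
        .single (by simpa using wr (AutWrStep.write ht))⟩
    | some q₀ =>
      obtain ⟨_, _, hr, -⟩ := P.exists_append_pblock_mem hp (by simpa [pending] using hm)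
      simp [reLet] at hr
  · cases oq with
    | none =>
      exact ⟨p, u, some q, hp, by simp [pending, quLet],
        .single (by simpa using wr (AutWrStep.query ht))⟩
    | some q₀ =>
      obtain ⟨_, _, hr, -⟩ := P.exists_append_pblock_mem hp (by simpa [pending] using hm)
      simp [reLet] at hr
  · cases oq with
    | none => exact absurd (by simpa [pending, reLet] using hm) (P.not_append_reLet_mem hp)
    | some q₀ =>
      obtain ⟨r₀, _, hr, hblock, hp'⟩ :=
        P.exists_append_pblock_mem hp (by simpa [pending] using hm)
      obtain ⟨rfl, -⟩ : r₀ = r ∧ _ := by simpa [reLet] using hr.symm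
      refine ⟨_, [], none, hp', by simp [pending, pblock, reLet], ?_⟩
      exact .head (by simpa using wr (AutWrStep.ask t q₀))
        (.single (ProtStep.qu (AutQuStep.answer ht q₀) hblock))

theorem toProtAut_run_of_path {P : ProtLang W Q R} {t f : S} {ext : List (PLet W Q R)}
    {z : List σ} (h : T.Path t ext z f) (hf : f ∈ T.accept) {p : List (PLet W Q R)} {u : List W}
    {oq : Option Q} (hp : IsProtocol P.valid p) (hm : p ++ pending u oq ++ ext ∈ P.prot) :
    Relation.ReflTransGen (ProtStep T.toProtAut P.prot)
      (.write t T.nilBuf oq, z.map .lt ++ [.rmark], u, p)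
      (.accept, [], [], p ++ pending u oq ++ ext) := by
  induction h generalizing p u oq with
  | refl =>
    cases oq with
    | none =>
      obtain rfl := P.eq_nil_of_append_map_wrLet_mem hp (by simpa [pending] using hm)
      simpa [pending] using Relation.ReflTransGen.single (ProtStep.wr (M := T.toProtAut)
        (P := P.prot) (u := []) (p := p) (v := []) (AutWrStep.finish hf))
    | some q₀ =>
      obtain ⟨_, _, hr, -⟩ := P.exists_append_pblock_mem hp (by simpa [pending] using hm)
      simp at hr
  | @step _ _ _ _ y ext _ ht _ ih =>
    obtain ⟨p', u', oq', hp', heq, hrun⟩ :=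
      T.toProtAut_run_of_trans (ext := ext) ht hp (by simpa [List.append_assoc] using hm) _
    have hm' : p' ++ pending u' oq' ++ ext ∈ P.prot := by
      simpa [heq, List.append_assoc] using hm
    simpa [heq, List.append_assoc] using
      hrun.trans ((T.toProtAut_run_read _ u' p' y _).trans (ih hf hp' hm'))

theorem tracksPath_of_toProtAut_run {P : Set (List (PLet W Q R))}
    {c : PConfig σ W Q R (AutState S T.Buffer Q)} {pf : List (PLet W Q R)}
    (h : Relation.ReflTransGen (ProtStep T.toProtAut P) c (.accept, [], [], pf)) :
    T.TracksPath pf c := by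
  induction h using Relation.ReflTransGen.head_induction_on with
  | refl => exact ⟨rfl, rfl, rfl⟩
  | head hstep _ ih =>
    cases hstep with
    | wr ht => exact .of_wrStep ht ih
    | qu ht _ => exact .of_quStep ht ih

theorem lang_toProtAut (P : ProtLang W Q R) : T.toProtAut.Lang P.prot = T.Img P.prot := by
  ext w
  constructor
  · rintro ⟨p, hp, _, rfl, hrun⟩
    obtain ⟨f, hf, ext, z, hpath, rfl, hz⟩ := T.tracksPath_of_toProtAut_run hrun
    obtain rfl := tape_injective hz
    exact ⟨_, hp, f, hf, by simpa using hpath⟩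
  · rintro ⟨p, hp, f, hf, hpath⟩
    have hrun := T.toProtAut_run_of_path hpath hf (u := []) (oq := none) .nil
      (by simpa [pending] using hp)
    exact ⟨p, hp, _, rfl, .head (ProtStep.wr (M := T.toProtAut) AutWrStep.start)
      (by simpa [pending] using hrun)⟩

end FST

theorem stmt0_general {W Q R σ : Type} [Fintype W] [Fintype Q] [Fintype R] [Fintype σ]
    (P : ProtLang W Q R) (L : Set (List σ)) :
    (∃ (n : ℕ) (M : ProtAut σ W Q R (Fin n)), L = M.Lang P.prot) ↔
      (∃ (m : ℕ) (T : FST (PLet W Q R) σ (Fin m)), L = T.Img P.prot) := by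
  constructor
  · rintro ⟨n, M, rfl⟩
    obtain ⟨m, T, hT⟩ := M.toFST.exists_fin_img_eq P.prot
    exact ⟨m, T, by rw [hT, M.img_toFST]⟩
  · rintro ⟨m, T, rfl⟩
    obtain ⟨n, M, hM⟩ := T.toProtAut.exists_fin_lang_eq P.prot
    exact ⟨n, M, by rw [hM, T.lang_toProtAut]⟩

/-- For every language of correct protocols `PROT` and finite input
alphabet `σ`, a language `L ⊆ σ*` is accepted by some one-way nondeterministic
`PROT`-automaton with input alphabet `σ` iff `L = T(PROT)` for some finite-state
transducer `T` from the protocol alphabet to `σ`: the class of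
`1NB_PROT`-recognizable languages is the principal rational cone generated by `PROT`. -/
theorem stmt0 {W Q R σ : Type} [Fintype W] [Fintype Q] [Fintype R]
    [Nonempty Q] [Nonempty R] [Fintype σ]
    (P : ProtLang W Q R) (L : Set (List σ)) :
    (∃ (n : ℕ) (M : ProtAut σ W Q R (Fin n)), L = M.Lang P.prot) ↔
      (∃ (m : ℕ) (T : FST (PLet W Q R) σ (Fin m)), L = T.Img P.prot) :=
  stmt0_general P L
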